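/- arXiv:2501.08768 — 2 statements merged into one kernel-verified Lean document; each statement's English description precedes it below -/
import Mathlib

section
/- Fix $t > 0$, $q > 0$, $\alpha, \beta \in (0,1)$. Let $\bar{\lambda}, \bar{\mu}, B, \tilde{B} \in \mathbb{R}$ satisfy $\bar{\lambda}^2/4 + \lambda^2 B^2 = t^2/q$ and $\bar{\mu}^2/4 + \mu^2\tilde{B}^2 = \alpha\beta t^2/q$ for some reals $\lambda, \mu$. Define $D_\pm = \big(\frac{\bar{\lambda}}{2} - i\lambda B\big)\big(\frac{\bar{\mu}}{2} \pm i\mu\tilde{B}\big) - \frac{\alpha\beta}{q}t^2$. Then $|D_+ D_-|^2 = \frac{\alpha^2\beta^2}{q^3}t^6\Big((\bar{\lambda} - \bar{\mu})(\alpha\beta\bar{\lambda} - \bar{\mu}) + \frac{(\alpha\beta - 1)^2}{q}t^2\Big)$. -/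
/-!
With `z = λ̄/2 - iλB`, `w = μ̄/2 + iμB̃` and `r = αβt²/q` we have `D₊ = z w - r`, `D₋ = z w̄ - r`.
As `Re (z w)` and `Re (z w̄)` differ only in the sign of `Im z Im w`, the two moduli
`|z|²|w|² + r² - 2r Re(·)` are `X ± 2r Im z Im w`, so their product is
`X² - 4r² (|z|² - (Re z)²)(|w|² - (Re w)²)`. The constraints say exactly `|z|² = t²/q` and
`|w|² = αβt²/q`, which leaves a rational identity in `λ̄, μ̄, t, q, αβ`.
-/

open Complex ComplexConjugate

theorem Complex.normSq_mul_sub_ofReal_mul_normSq_mul_conj_sub_ofReal (z w : ℂ) (r : ℝ) :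
    normSq (z * w - r) * normSq (z * conj w - r) =
      (normSq z * normSq w + r ^ 2 - 2 * r * z.re * w.re) ^ 2
        - 4 * r ^ 2 * (normSq z - z.re ^ 2) * (normSq w - w.re ^ 2) := by
  simp only [normSq_apply, sub_re, sub_im, mul_re, mul_im, conj_re, conj_im, ofReal_re,
    ofReal_im]
  ring

theorem stmt10_general (t q α β : ℝ) (hq : 0 < q)
    (lamb mub lam mu B Bt : ℝ)
    (h1 : lamb ^ 2 / 4 + lam ^ 2 * B ^ 2 = t ^ 2 / q)
    (h2 : mub ^ 2 / 4 + mu ^ 2 * Bt ^ 2 = α * β * t ^ 2 / q)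
    (Dp Dm : ℂ)
    (hDp : Dp = ((lamb : ℂ) / 2 - Complex.I * (lam : ℂ) * (B : ℂ)) *
        ((mub : ℂ) / 2 + Complex.I * (mu : ℂ) * (Bt : ℂ)) - ((α * β / q * t ^ 2 : ℝ) : ℂ))
    (hDm : Dm = ((lamb : ℂ) / 2 - Complex.I * (lam : ℂ) * (B : ℂ)) *
        ((mub : ℂ) / 2 - Complex.I * (mu : ℂ) * (Bt : ℂ)) - ((α * β / q * t ^ 2 : ℝ) : ℂ)) :
    (‖Dp * Dm‖) ^ 2 =
      α ^ 2 * β ^ 2 / q ^ 3 * t ^ 6 *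
        ((lamb - mub) * (α * β * lamb - mub) + (α * β - 1) ^ 2 / q * t ^ 2) := by
  have hz : (lamb : ℂ) / 2 - I * lam * B = ⟨lamb / 2, -(lam * B)⟩ := Complex.ext (by simp) (by simp)
  have hw : (mub : ℂ) / 2 + I * mu * Bt = ⟨mub / 2, mu * Bt⟩ := Complex.ext (by simp) (by simp)
  have hw' : (mub : ℂ) / 2 - I * mu * Bt = conj ⟨mub / 2, mu * Bt⟩ :=
    Complex.ext (by simp) (by simp)
  have hnz : normSq ⟨lamb / 2, -(lam * B)⟩ = t ^ 2 / q := by rw [normSq_mk]; linarith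
  have hnw : normSq ⟨mub / 2, mu * Bt⟩ = α * β * t ^ 2 / q := by rw [normSq_mk]; linarith
  rw [Complex.sq_norm, normSq_mul, hDp, hDm, hz, hw, hw',
    normSq_mul_sub_ofReal_mul_normSq_mul_conj_sub_ofReal, hnz, hnw]
  field_simp
  ring

/-- Explicit computation of the common denominator `|D₊D₋|²` in the limiting rescaled
mean squared overlap formulas, in the Marchenko–Pastur case. -/
theorem stmt10 (t q α β : ℝ) (ht : 0 < t) (hq : 0 < q)
    (hα : α ∈ Set.Ioo (0 : ℝ) 1) (hβ : β ∈ Set.Ioo (0 : ℝ) 1)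
    (lamb mub lam mu B Bt : ℝ)
    (h1 : lamb ^ 2 / 4 + lam ^ 2 * B ^ 2 = t ^ 2 / q)
    (h2 : mub ^ 2 / 4 + mu ^ 2 * Bt ^ 2 = α * β * t ^ 2 / q)
    (Dp Dm : ℂ)
    (hDp : Dp = ((lamb : ℂ) / 2 - Complex.I * (lam : ℂ) * (B : ℂ)) *
        ((mub : ℂ) / 2 + Complex.I * (mu : ℂ) * (Bt : ℂ)) - ((α * β / q * t ^ 2 : ℝ) : ℂ))
    (hDm : Dm = ((lamb : ℂ) / 2 - Complex.I * (lam : ℂ) * (B : ℂ)) *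
        ((mub : ℂ) / 2 - Complex.I * (mu : ℂ) * (Bt : ℂ)) - ((α * β / q * t ^ 2 : ℝ) : ℂ)) :
    (‖Dp * Dm‖) ^ 2 =
      α ^ 2 * β ^ 2 / q ^ 3 * t ^ 6 *
        ((lamb - mub) * (α * β * lamb - mub) + (α * β - 1) ^ 2 / q * t ^ 2) :=
  stmt10_general t q α β hq lamb mub lam mu B Bt h1 h2 Dp Dm hDp hDm
end

section
/- Let $a, f_0 \in \mathbb{R}$ (or $\mathbb{C}$) and define $f(s) = \frac{f_0 + (a - f_0^2)s}{1 - 2f_0 s - (a - f_0^2)s^2}$ and $F(s) = -\frac{1}{2}\log\big(1 - 2f_0 s - (a - f_0^2)s^2\big)$ on an interval around $0$ where $1 - 2f_0 s - (a - f_0^2)s^2 > 0$ (resp. nonvanishing). Then $F' = f$, $f(0) = f_0$, $F(0) = 0$, and $f$ solves the integro-differential equation $f'(s) = f(s)^2 + a\,e^{4F(s)}$. -/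
/-!
Write `q(s) = 1 - 2f₀s - (a - f₀²)s²` and `N(s) = f₀ + (a - f₀²)s`, so that `f = N / q` and
`F = -½ log q`. Everything follows from two facts: `q' = -2N`, which gives `F' = -q'/(2q) = f`,
and the first integral `N² + (a - f₀²) q = a`, which turns the quotient rule
`f' = (N' q - N q') / q² = ((a - f₀²) q + 2N²) / q²` into `f² + a / q² = f² + a e^{4F}`.
-/

open Real

theorem exp_four_mul_neg_half_mul_log {x : ℝ} (hx : 0 < x) :
    exp (4 * (-(1 / 2) * log x)) = (x ^ 2)⁻¹ := by
  rw [show 4 * (-(1 / 2) * log x) = -log (x ^ 2) by rw [log_pow]; push_cast; ring,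
    exp_neg, exp_log (by positivity)]

section Riccati

variable {q N : ℝ → ℝ} {s n c a : ℝ}

theorem hasDerivAt_neg_half_mul_log (hq : HasDerivAt q (-2 * n) s) (hq0 : q s ≠ 0) :
    HasDerivAt (fun t => -(1 / 2) * log (q t)) (n / q s) s := by
  refine ((hq.log hq0).const_mul (-(1 / 2))).congr_deriv ?_
  field_simp

theorem hasDerivAt_div_of_riccati (hN : HasDerivAt N c s) (hq : HasDerivAt q (-2 * N s) s)
    (hq0 : q s ≠ 0) (hint : N s ^ 2 + c * q s = a) :
    HasDerivAt (fun t => N t / q t) ((N s / q s) ^ 2 + a * (q s ^ 2)⁻¹) s := by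
  refine (hN.div hq hq0).congr_deriv ?_
  rw [← hint]
  field_simp
  ring

end Riccati

section Explicit

variable (a f0 : ℝ)

theorem hasDerivAt_riccatiDenom (s : ℝ) :
    HasDerivAt (fun t => 1 - 2 * f0 * t - (a - f0 ^ 2) * t ^ 2)
      (-2 * (f0 + (a - f0 ^ 2) * s)) s := by
  refine ((((hasDerivAt_id s).const_mul (2 * f0)).const_sub 1).sub
    ((hasDerivAt_pow 2 s).const_mul (a - f0 ^ 2))).congr_deriv ?_
  simp only [mul_one, Nat.cast_ofNat]
  ring

theorem hasDerivAt_riccatiNum (s : ℝ) :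
    HasDerivAt (fun t => f0 + (a - f0 ^ 2) * t) (a - f0 ^ 2) s := by
  simpa using ((hasDerivAt_id s).const_mul (a - f0 ^ 2)).const_add f0

theorem riccatiNum_sq_add_mul_riccatiDenom (s : ℝ) :
    (f0 + (a - f0 ^ 2) * s) ^ 2 + (a - f0 ^ 2) * (1 - 2 * f0 * s - (a - f0 ^ 2) * s ^ 2) = a := by
  ring

end Explicit

theorem stmt11_general (a f0 : ℝ) (I : Set ℝ)
    (hpos : ∀ s ∈ I, 0 < 1 - 2 * f0 * s - (a - f0 ^ 2) * s ^ 2)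
    (f F : ℝ → ℝ)
    (hf : ∀ s, f s = (f0 + (a - f0 ^ 2) * s) / (1 - 2 * f0 * s - (a - f0 ^ 2) * s ^ 2))
    (hF : ∀ s, F s = -(1 / 2) * Real.log (1 - 2 * f0 * s - (a - f0 ^ 2) * s ^ 2)) :
    f 0 = f0 ∧ F 0 = 0 ∧
    (∀ s ∈ I, HasDerivAt F (f s) s) ∧
    (∀ s ∈ I, HasDerivAt f ((f s) ^ 2 + a * Real.exp (4 * F s)) s) := by
  obtain rfl : f = _ := funext hf
  obtain rfl : F = _ := funext hF
  refine ⟨by simp, by simp, fun s hs => ?_, fun s hs => ?_⟩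
  · exact hasDerivAt_neg_half_mul_log (hasDerivAt_riccatiDenom a f0 s) (hpos s hs).ne'
  · rw [exp_four_mul_neg_half_mul_log (hpos s hs)]
    exact hasDerivAt_div_of_riccati (hasDerivAt_riccatiNum a f0 s)
      (hasDerivAt_riccatiDenom a f0 s) (hpos s hs).ne' (riccatiNum_sq_add_mul_riccatiDenom a f0 s)

/-- Explicit solution of the Riccati-type equation for the characteristic flow of `S_W`:
with `f(s) = (f₀ + (a - f₀²)s)/(1 - 2f₀s - (a - f₀²)s²)` and
`F(s) = -(1/2) log(1 - 2f₀s - (a - f₀²)s²)` on an interval around `0` where the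
denominator is positive, one has `F' = f`, `f(0) = f₀`, `F(0) = 0`, and
`f'(s) = f(s)² + a e^{4F(s)}`. -/
theorem stmt11 (a f0 : ℝ) (I : Set ℝ) (hI : IsOpen I) (h0 : (0 : ℝ) ∈ I)
    (hpos : ∀ s ∈ I, 0 < 1 - 2 * f0 * s - (a - f0 ^ 2) * s ^ 2)
    (f F : ℝ → ℝ)
    (hf : ∀ s, f s = (f0 + (a - f0 ^ 2) * s) / (1 - 2 * f0 * s - (a - f0 ^ 2) * s ^ 2))
    (hF : ∀ s, F s = -(1 / 2) * Real.log (1 - 2 * f0 * s - (a - f0 ^ 2) * s ^ 2)) :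
    f 0 = f0 ∧ F 0 = 0 ∧
    (∀ s ∈ I, HasDerivAt F (f s) s) ∧
    (∀ s ∈ I, HasDerivAt f ((f s) ^ 2 + a * Real.exp (4 * F s)) s) :=
  stmt11_general a f0 I hpos f F hf hF
end
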